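/- No-gap property of maximizers: if d* is a maximizer, then for every index i and every integer v with d* i < v ≤ M i there exists an index j with d* j = v (no variable of a maximizing assignment can be raised to an unused value below its maximum). -/

import Mathlib

/-! If `v` were unused, raising `d* i` to `v` would keep the assignment up-feasible and
increase the objective by `a i * (v - d* i) > 0`, contradicting maximality. -/

open Function

theorem Function.Injective.update_of_notMem_range {α β : Type*} [DecidableEq α] {f : α → β}
    (hf : Injective f) (i : α) {v : β} (hv : v ∉ Set.range f) : Injective (update f i v) := by
  intro x y hxy
  by_cases hx : x = i <;> by_cases hy : y = i
  · rw [hx, hy]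
  · simp only [hx, update_self, update_of_ne hy] at hxy
    exact absurd ⟨y, hxy.symm⟩ hv
  · simp only [hy, update_self, update_of_ne hx] at hxy
    exact absurd ⟨x, hxy⟩ hv
  · simp only [update_of_ne hx, update_of_ne hy] at hxy
    exact hf hxy

theorem Finset.sum_mul_update {ι R : Type*} [Fintype ι] [DecidableEq ι] [CommRing R]
    (a d : ι → R) (i : ι) (v : R) :
    ∑ k, a k * update d i v k = ∑ k, a k * d k + a i * (v - d i) := by
  have : update d i v = d + Pi.single i (v - d i) := by
    ext k; rcases eq_or_ne k i with rfl | hk <;> simp [*]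
  simp [this, mul_add, Finset.sum_add_distrib, Pi.single_apply]

/-- No-gap property of maximizers: every value `v` with `d* i < v ≤ M i` is used
by some variable. -/
theorem stmt_10 (n : ℕ) (a M : Fin n → ℤ) (ha : ∀ i, 0 < a i)
    (dstar : Fin n → ℤ)
    (hfeas : Function.Injective dstar ∧ ∀ i, dstar i ≤ M i)
    (hmax : ∀ d : Fin n → ℤ, Function.Injective d → (∀ i, d i ≤ M i) →
      ∑ i, a i * d i ≤ ∑ i, a i * dstar i) :
    ∀ i : Fin n, ∀ v : ℤ, dstar i < v → v ≤ M i → ∃ j : Fin n, dstar j = v := by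
  intro i v hlt hle
  by_contra hunused
  obtain ⟨hinj, hbound⟩ := hfeas
  have hraised_le : update dstar i v ≤ M :=
    update_le_iff.mpr ⟨hle, fun k _ => hbound k⟩
  have hgain := hmax _ (hinj.update_of_notMem_range i hunused) hraised_le
  rw [Finset.sum_mul_update] at hgain
  have : 0 < a i * (v - dstar i) := mul_pos (ha i) (sub_pos.mpr hlt)
  omega
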